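/- In a finite field F_q with q odd and q > 13, for any distinct elements a₁, a₂ ∈ F_q there exists c ∈ F_q such that a₁ + c is a nonzero square and a₂ + c is a nonsquare. -/
import Mathlib


/-- the `n = 1` case of Duret's lemma: in a finite field of odd order
`q > 13`, for any distinct `a₁, a₂` there is `c` with `a₁ + c` a nonzero square and
`a₂ + c` a nonsquare. -/
theorem duret_n_one
    (Fq : Type*) [Field Fq] [Fintype Fq]
    (hodd : Odd (Fintype.card Fq)) (hbig : 13 < Fintype.card Fq)
    (a₁ a₂ : Fq) (hne : a₁ ≠ a₂) :
    ∃ c : Fq, (a₁ + c ≠ 0 ∧ IsSquare (a₁ + c)) ∧ (a₂ + c ≠ 0 ∧ ¬ IsSquare (a₂ + c)) := by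
  classical
  set χ := quadraticChar Fq with hχdef
  have hF : ringChar Fq ≠ 2 := by
    intro h
    have h2 := FiniteField.even_card_of_char_two h
    rcases hodd with ⟨k, hk⟩
    omega
  set d := a₁ - a₂ with hd
  have hd0 : d ≠ 0 := sub_ne_zero.mpr hne
  -- bounds on χ
  have hbnd : ∀ a : Fq, -1 ≤ χ a ∧ χ a ≤ 1 := by
    intro a
    by_cases ha : a = 0
    · rw [ha, hχdef, quadraticChar_zero]; norm_num
    · rcases quadraticChar_dichotomy ha with h | h <;> rw [h] <;> norm_num
  -- sum of χ is zero
  have hS0 : ∑ x : Fq, χ x = 0 := quadraticChar_sum_zero hF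
  have hS1 : ∑ x : Fq, χ (x - d) = 0 := by
    rw [← hS0]
    exact Fintype.sum_equiv (Equiv.subRight d) _ _ (fun x => rfl)
  -- the key character sum
  have hm1 : χ (-1) * χ (-1) = 1 := by
    have := quadraticChar_sq_one (F := Fq) (a := -1) (by norm_num)
    rwa [sq] at this
  have hS2 : ∑ x : Fq, χ x * χ (x - d) = -1 := by
    have hre : ∑ x : Fq, χ x * χ (x - d) = ∑ x : Fq, χ (d * x) * χ (d * x - d) :=
      (Fintype.sum_equiv (Equiv.mulLeft₀ d hd0) _ _ (fun x => rfl)).symm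
    have hstep : ∀ x : Fq, χ (d * x) * χ (d * x - d) = χ (-1) * (χ x * χ (1 - x)) := by
      intro x
      have h1 : d * x - d = d * (-1 * (1 - x)) := by ring
      rw [h1, map_mul, map_mul, map_mul]
      have hdd : χ d * χ d = 1 := by
        have := quadraticChar_sq_one (F := Fq) hd0
        rwa [sq] at this
      rw [show χ d * χ x * (χ d * (χ (-1) * χ (1 - x)))
            = (χ d * χ d) * (χ (-1) * (χ x * χ (1 - x))) by ring, hdd, one_mul]
    rw [hre]
    simp_rw [hstep]
    rw [← Finset.mul_sum]
    have hjac : ∑ x : Fq, χ x * χ (1 - x) = -χ (-1) := by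
      have h1 : jacobiSum χ χ⁻¹ = -χ (-1) := jacobiSum_nontrivial_inv (quadraticChar_ne_one hF)
      rw [(quadraticChar_isQuadratic Fq).inv] at h1
      exact h1
    rw [hjac, mul_neg, hm1]
  -- main counting argument, by contradiction
  by_contra hcon
  -- each term of f is bounded by g
  have hterm : ∀ x : Fq, (1 + χ x) * (1 - χ (x - d)) ≤
      if x = 0 ∨ x = d then 2 else 0 := by
    intro x
    by_cases hx0 : x = 0
    · subst hx0
      simp only [true_or, if_true]
      rw [hχdef, quadraticChar_zero]
      have := (hbnd (0 - d)).1
      nlinarith [(hbnd (0 - d)).1]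
    by_cases hxd : x = d
    · subst hxd
      simp only [or_true, if_true]
      rw [sub_self, hχdef, quadraticChar_zero]
      nlinarith [(hbnd d).2]
    · simp only [hx0, hxd, or_self, if_false]
      -- x ≠ 0, x ≠ d
      by_cases hsq : IsSquare x
      · -- then χ x = 1; use hypothesis with c = x - a₁ to get χ (x - d) = 1
        have hxd0 : x - d ≠ 0 := sub_ne_zero.mpr hxd
        have e1 : a₁ + (x - a₁) = x := by ring
        have e2 : a₂ + (x - a₁) = x - d := by rw [hd]; ring
        have hsq2 : IsSquare (x - d) := by
          by_contra hns
          exact hcon ⟨x - a₁, ⟨by rw [e1]; exact hx0, by rw [e1]; exact hsq⟩,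
            by rw [e2]; exact hxd0, by rw [e2]; exact hns⟩
        have : χ (x - d) = 1 := (quadraticChar_one_iff_isSquare hxd0).mpr hsq2
        rw [this]
        simp
      · have : χ x = -1 := (quadraticChar_neg_one_iff_not_isSquare).mpr hsq
        rw [this]
        simp
  -- summing
  have hsumle : ∑ x : Fq, (1 + χ x) * (1 - χ (x - d)) ≤
      ∑ x : Fq, (if x = 0 ∨ x = d then (2 : ℤ) else 0) :=
    Finset.sum_le_sum (fun x _ => hterm x)
  have hgsum : ∑ x : Fq, (if x = 0 ∨ x = d then (2 : ℤ) else 0) = 4 := by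
    have hmem : ∀ x : Fq, (if x = 0 ∨ x = d then (2 : ℤ) else 0)
        = if x ∈ ({0, d} : Finset Fq) then 2 else 0 := by
      intro x; simp
    rw [Finset.sum_congr rfl (fun x _ => hmem x),
      Finset.sum_ite_mem, Finset.univ_inter, Finset.sum_const]
    rw [Finset.card_insert_of_notMem (by simpa using hd0.symm)]
    simp
  have hfsum : ∑ x : Fq, (1 + χ x) * (1 - χ (x - d)) = (Fintype.card Fq : ℤ) + 1 := by
    have hexp : ∀ x : Fq, (1 + χ x) * (1 - χ (x - d))
        = 1 + χ x - χ (x - d) - χ x * χ (x - d) := by intro x; ring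
    simp_rw [hexp]
    rw [Finset.sum_sub_distrib, Finset.sum_sub_distrib, Finset.sum_add_distrib,
      hS0, hS1, hS2, Finset.sum_const, Finset.card_univ]
    ring
  rw [hfsum, hgsum] at hsumle
  have : (13 : ℤ) < (Fintype.card Fq : ℤ) := by exact_mod_cast hbig
  linarith
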